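/- Let R be a local ring. Every automorphism of the R-algebra M_n(R) of n×n matrices is inner, i.e., of the form A ↦ U A U⁻¹ for some U ∈ GL_n(R). -/

import Mathlib

/-!
For an `R`-algebra map `ψ : Mₙ(R) → End_R(M)`, the matrix units `Eᵢⱼ` act on `M` through `ψ` and
identify `M` with `Pⁿ`, where `P` is the image of the idempotent `ψ(E₀₀)`, in such a way that
`ψ` becomes the standard action of matrices on column vectors with entries in `P`. When
`M = Rⁿ`, the summand `P` is finite projective, hence free over the local ring `R`, and
comparing ranks in `Pⁿ ≅ Rⁿ` gives `P ≅ R`. The resulting automorphism of `Rⁿ` conjugates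
`ψ` to the identity.
-/

open Module

theorem LinearMap.IsProj.projective {R M : Type*} [Semiring R] [AddCommMonoid M] [Module R M]
    [Module.Projective R M] {m : Submodule R M} {f : Module.End R M} (h : IsProj m f) :
    Module.Projective R m :=
  .of_split m.subtype h.codRestrict (LinearMap.ext h.codRestrict_apply_cod)

namespace Matrix

section Corner

variable {R M ι : Type*} [CommSemiring R] [AddCommMonoid M] [Module R M] [Fintype ι]
  [DecidableEq ι] (ψ : Matrix ι ι R →ₐ[R] Module.End R M)

theorem mul_single_one (A : Matrix ι ι R) (j k : ι) :
    A * single j k 1 = ∑ i, A i j • single i k 1 := by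
  ext a b
  by_cases hb : k = b <;> simp [Matrix.sum_apply, mul_apply, single_apply, hb]

theorem algHom_single_one_apply_same (i j k : ι) (x : M) :
    ψ (single i j 1) (ψ (single j k 1) x) = ψ (single i k 1) x := by
  rw [← Module.End.mul_apply, ← map_mul, single_mul_single_same, mul_one]

theorem algHom_single_one_apply_of_ne {i j k l : ι} (h : j ≠ k) (x : M) :
    ψ (single i j 1) (ψ (single k l 1) x) = 0 := by
  rw [← Module.End.mul_apply, ← map_mul]
  simp [h]

theorem sum_algHom_single_one_apply (x : M) : ∑ i, ψ (single i i 1) x = x := by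
  rw [← LinearMap.sum_apply, ← map_sum, sum_single_one, map_one, Module.End.one_apply]

theorem algHom_apply_single_one_apply (A : Matrix ι ι R) (j k : ι) (x : M) :
    ψ A (ψ (single j k 1) x) = ∑ i, A i j • ψ (single i k 1) x := by
  rw [← Module.End.mul_apply, ← map_mul, mul_single_one, map_sum, LinearMap.sum_apply]
  simp_rw [map_smul, LinearMap.smul_apply]

theorem isIdempotentElem_algHom_single_one (i : ι) : IsIdempotentElem (ψ (single i i 1)) := by
  rw [IsIdempotentElem, ← map_mul, single_mul_single_same, mul_one]

def cornerPiEquiv (i₀ : ι) : (ι → LinearMap.range (ψ (single i₀ i₀ 1))) ≃ₗ[R] M where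
  toFun p := ∑ i, ψ (single i i₀ 1) (p i)
  map_add' p q := by simp [Finset.sum_add_distrib]
  map_smul' c p := by simp [Finset.smul_sum]
  invFun x i := ⟨ψ (single i₀ i 1) x, ⟨_, algHom_single_one_apply_same ψ i₀ i₀ i x⟩⟩
  left_inv p := by
    ext i : 2
    obtain ⟨y, hy⟩ := (p i).2
    change ψ (single i₀ i 1) (∑ j, ψ (single j i₀ 1) (p j)) = p i
    rw [map_sum, Finset.sum_eq_single_of_mem i (Finset.mem_univ i) fun j _ hji =>
      algHom_single_one_apply_of_ne ψ (Ne.symm hji) _, ← hy, algHom_single_one_apply_same,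
      algHom_single_one_apply_same]
  right_inv x := by
    simp only [algHom_single_one_apply_same, sum_algHom_single_one_apply]

theorem cornerPiEquiv_apply (i₀ : ι) (p : ι → LinearMap.range (ψ (single i₀ i₀ 1))) :
    cornerPiEquiv ψ i₀ p = ∑ i, ψ (single i i₀ 1) (p i) := rfl

theorem algHom_apply_cornerPiEquiv (i₀ : ι) (A : Matrix ι ι R)
    (p : ι → LinearMap.range (ψ (single i₀ i₀ 1))) :
    ψ A (cornerPiEquiv ψ i₀ p) = cornerPiEquiv ψ i₀ fun i => ∑ j, A i j • p j := by
  simp only [cornerPiEquiv_apply, map_sum, algHom_apply_single_one_apply, Submodule.coe_sum,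
    Submodule.coe_smul, map_smul]
  exact Finset.sum_comm

end Corner

variable {R ι : Type*} [CommRing R] [IsLocalRing R] [Fintype ι] [DecidableEq ι]

theorem nonempty_linearEquiv_range_algHom_single_one
    (ψ : Matrix ι ι R →ₐ[R] Module.End R (ι → R)) (i₀ : ι) :
    Nonempty (R ≃ₗ[R] LinearMap.range (ψ (single i₀ i₀ 1))) := by
  have := (LinearMap.IsIdempotentElem.isProj_range _
    (isIdempotentElem_algHom_single_one ψ i₀)).projective
  have := free_of_flat_of_isLocalRing (R := R) (P := LinearMap.range (ψ (single i₀ i₀ 1)))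
  apply nonempty_linearEquiv_of_finrank_eq_one
  have hcard := (cornerPiEquiv ψ i₀).finrank_eq
  rw [finrank_pi_fintype, finrank_fintype_fun_eq_card, Finset.sum_const, Finset.card_univ,
    smul_eq_mul] at hcard
  exact Nat.eq_of_mul_eq_mul_left (Fintype.card_pos_iff.2 ⟨i₀⟩) (by rw [hcard, mul_one])

theorem exists_linearEquiv_algHom_apply_eq_conjAlgEquiv
    (ψ : Matrix ι ι R →ₐ[R] Module.End R (ι → R)) :
    ∃ T : (ι → R) ≃ₗ[R] (ι → R), ∀ A, ψ A = T.conjAlgEquiv R (toLin' A) := by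
  cases isEmpty_or_nonempty ι
  · exact ⟨LinearEquiv.refl R _, fun _ => Subsingleton.elim _ _⟩
  obtain ⟨i₀⟩ := ‹Nonempty ι›
  obtain ⟨c⟩ := nonempty_linearEquiv_range_algHom_single_one ψ i₀
  set T := (LinearEquiv.piCongrRight fun _ => c).trans (cornerPiEquiv ψ i₀)
  refine ⟨T, fun A => LinearMap.ext fun x => ?_⟩
  obtain ⟨y, rfl⟩ := T.surjective x
  simp only [T, LinearEquiv.trans_apply, LinearEquiv.conjAlgEquiv_apply, LinearMap.comp_apply,
    LinearEquiv.coe_coe, algHom_apply_cornerPiEquiv]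
  congr 1
  ext i : 1
  simp [mulVec, dotProduct, ← smul_eq_mul]

theorem exists_algHom_apply_eq_conj (φ : Matrix ι ι R →ₐ[R] Matrix ι ι R) :
    ∃ U : GL ι R, ∀ A, φ A = (U : Matrix ι ι R) * A * (↑U⁻¹ : Matrix ι ι R) := by
  obtain ⟨T, hT⟩ := exists_linearEquiv_algHom_apply_eq_conjAlgEquiv
    ((toLinAlgEquiv' : Matrix ι ι R ≃ₐ[R] _).toAlgHom.comp φ)
  set U := GeneralLinearGroup.toLin.symm (.ofLinearEquiv T)
  have hU : GeneralLinearGroup.toLin U = .ofLinearEquiv T := MulEquiv.apply_symm_apply _ _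
  have hval (V : GL ι R) : toLinAlgEquiv' (V : Matrix ι ι R) = GeneralLinearGroup.toLin V := rfl
  refine ⟨U, fun A => toLinAlgEquiv'.injective ?_⟩
  rw [map_mul, map_mul, hval, hval, map_inv, hU]
  exact hT A

end Matrix

/-- **Skolem–Noether for matrix algebras over a local ring.**
Let `R` be a (commutative) local ring. Every `R`-algebra automorphism of the algebra
`Matrix (Fin n) (Fin n) R` of `n × n` matrices is inner: it has the form
`A ↦ U * A * U⁻¹` for some invertible matrix `U ∈ GL n R`. -/
theorem matrix_algebra_automorphism_isInner
    (R : Type*) [CommRing R] [IsLocalRing R] (n : ℕ)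
    (φ : Matrix (Fin n) (Fin n) R ≃ₐ[R] Matrix (Fin n) (Fin n) R) :
    ∃ U : GL (Fin n) R, ∀ A : Matrix (Fin n) (Fin n) R,
      φ A = (U : Matrix (Fin n) (Fin n) R) * A * (↑U⁻¹ : Matrix (Fin n) (Fin n) R) :=
  Matrix.exists_algHom_apply_eq_conj φ.toAlgHom
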